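/- Assume β ≠ 0, 1 < p < ∞, and τ > τ̌_p. Define h_p = g_p ∘ f on (−1, 1), and let ρ̌_p = f⁻¹(θ̌_p) where θ̌_p is the unique minimizer of g_p. Then there exist unique ρ⁻ ∈ (−1, ρ̌_p) and ρ⁺ ∈ (ρ̌_p, 1) such that h_p(ρ⁻) = h_p(ρ⁺) = τ; moreover, writing [θ⁻, θ⁺] = {θ ∈ ℝ : g_p(θ) ≤ τ}, one has θ⁻ = f(ρ⁺) and θ⁺ = f(ρ⁻). -/

import Mathlib

/-- The leakage curve `g_p(θ) = ‖α − θ·β‖_p`, where `‖·‖_p` is the `ℓ^p` norm on `ℝ^d`. -/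
noncomputable def gLeak {d : ℕ} (p : ℝ) (α β : Fin d → ℝ) (θ : ℝ) : ℝ :=
  (∑ i, |α i - θ * β i| ^ p) ^ (1 / p)

open Real Set Filter Topology

/-!
For `1 < p` and `β ≠ 0`, `θ ↦ g_p(θ)^p = ∑ |α i - θ β i|^p` is strictly convex, because `|·|^p` is.
Hence `g_p` strictly decreases left of its minimiser `θ̌` and strictly increases right of it;
being continuous and coercive, it crosses any level `τ > g_p(θ̌)` exactly once on each side, at
`θ⁻ < θ̌ < θ⁺`, and `{g_p ≤ τ} = [θ⁻, θ⁺]`. Since `ρ / √(1 - ρ²) = tan (arcsin ρ)`, the map `f` is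
an order-reversing bijection `(-1, 1) → ℝ`; it carries `(-1, ρ̌)` onto `(θ̌, ∞)` and `(ρ̌, 1)` onto
`(-∞, θ̌)`, so the two crossings pull back to unique `ρ⁻ = f⁻¹(θ⁺)` and `ρ⁺ = f⁻¹(θ⁻)`.
-/

lemma StrictConvexOn.lt_of_isMinOn_of_mem_segment {𝕜 E β : Type*} [Field 𝕜] [LinearOrder 𝕜]
    [IsStrictOrderedRing 𝕜] [AddCommGroup E] [Module 𝕜 E] [AddCommGroup β] [LinearOrder β]
    [IsOrderedAddMonoid β] [Module 𝕜 β] [PosSMulStrictMono 𝕜 β] {s : Set E} {f : E → β}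
    {m a b : E} (hf : StrictConvexOn 𝕜 s f) (hmin : IsMinOn f s m) (hm : m ∈ s) (hb : b ∈ s)
    (ha : a ∈ segment 𝕜 m b) (hab : a ≠ b) : f a < f b := by
  rcases eq_or_ne a m with rfl | ham
  · refine (isMinOn_iff.1 hmin b hb).lt_of_ne fun h => hab ?_
    exact hf.eq_of_isMinOn hmin (isMinOn_iff.2 fun z hz => h ▸ isMinOn_iff.1 hmin z hz) hm hb
  · have hmb : m ≠ b := by
      rintro rfl
      rw [segment_same] at ha
      exact ham ha
    have := hf.lt_on_openSegment hm hb hmb (mem_openSegment_of_ne_left_right ham.symm hab.symm ha)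
    rwa [max_eq_right (isMinOn_iff.1 hmin b hb)] at this

section
variable {f : ℝ → ℝ} {m : ℝ}

lemma StrictConvexOn.strictMonoOn_Ici_of_isMinOn (hf : StrictConvexOn ℝ univ f)
    (hmin : IsMinOn f univ m) : StrictMonoOn f (Ici m) := fun a ha b _ hab =>
  hf.lt_of_isMinOn_of_mem_segment hmin trivial trivial
    (by rw [segment_eq_Icc (ha.trans hab.le)]; exact ⟨ha, hab.le⟩) hab.ne

lemma StrictConvexOn.strictAntiOn_Iic_of_isMinOn (hf : StrictConvexOn ℝ univ f)
    (hmin : IsMinOn f univ m) : StrictAntiOn f (Iic m) := fun a _ b hb hab =>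
  hf.lt_of_isMinOn_of_mem_segment hmin trivial trivial
    (by rw [segment_symm, segment_eq_Icc (hab.le.trans hb)]; exact ⟨hab.le, hb⟩) hab.ne'
end

section
variable {p : ℝ}

lemma strictConvexOn_abs_rpow (hp : 1 < p) : StrictConvexOn ℝ univ fun x : ℝ => |x| ^ p := by
  refine ⟨convex_univ, fun x _ y _ hxy a b ha hb hab => ?_⟩
  simp only [smul_eq_mul]
  rcases eq_or_ne |x| |y| with hxy' | hxy'
  · -- now the triangle inequality, not the convexity of `t ↦ t ^ p`, is strict
    have hy : y = -x := (neg_eq_iff_eq_neg.2 ((abs_eq_abs.1 hxy').resolve_left hxy)).symm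
    have hx : x ≠ 0 := by rintro rfl; simp_all
    have hshort : |a * x + b * y| < |x| := by
      rw [hy, show a * x + b * -x = (a - b) * x by ring, abs_mul]
      exact mul_lt_of_lt_one_left (abs_pos.2 hx) (abs_sub_lt_iff.2 ⟨by linarith, by linarith⟩)
    calc |a * x + b * y| ^ p < |x| ^ p := rpow_lt_rpow (abs_nonneg _) hshort (by linarith)
      _ = a * |x| ^ p + b * |y| ^ p := by rw [← hxy']; linear_combination (-|x| ^ p) * hab
  · have htri : |a * x + b * y| ≤ a * |x| + b * |y| := by
      refine (abs_add_le _ _).trans_eq ?_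
      rw [abs_mul, abs_mul, abs_of_pos ha, abs_of_pos hb]
    calc |a * x + b * y| ^ p ≤ (a * |x| + b * |y|) ^ p :=
          rpow_le_rpow (abs_nonneg _) htri (by linarith)
      _ < a * |x| ^ p + b * |y| ^ p := by
        simpa using (strictConvexOn_rpow hp).2 (abs_nonneg x) (abs_nonneg y) hxy' ha hb hab

lemma strictConvexOn_sum_abs_sub_mul_rpow {ι : Type*} [Fintype ι] (hp : 1 < p) {α β : ι → ℝ}
    (hβ : β ≠ 0) : StrictConvexOn ℝ univ fun θ : ℝ => ∑ i, |α i - θ * β i| ^ p := by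
  obtain ⟨j, hj⟩ := Function.ne_iff.1 hβ
  have hφ := strictConvexOn_abs_rpow hp
  refine ⟨convex_univ, fun x _ y _ hxy a b ha hb hab => ?_⟩
  have hline : ∀ i, α i - (a • x + b • y) * β i = a • (α i - x * β i) + b • (α i - y * β i) :=
    fun i => by simp only [smul_eq_mul]; linear_combination (α i) * hab.symm
  simp only [hline, Finset.smul_sum, ← Finset.sum_add_distrib]
  refine Finset.sum_lt_sum (fun i _ => hφ.convexOn.2 trivial trivial ha.le hb.le hab)
    ⟨j, Finset.mem_univ j, hφ.2 trivial trivial (fun h => hxy ?_) ha hb hab⟩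
  exact mul_right_cancel₀ hj (by linarith)

variable {d : ℕ} {α β : Fin d → ℝ}

lemma gLeak_le_gLeak_iff (hp : 0 < p) {x y : ℝ} :
    gLeak p α β x ≤ gLeak p α β y ↔ ∑ i, |α i - x * β i| ^ p ≤ ∑ i, |α i - y * β i| ^ p :=
  rpow_le_rpow_iff (by positivity) (by positivity) (by positivity)

lemma gLeak_lt_gLeak_iff (hp : 0 < p) {x y : ℝ} :
    gLeak p α β x < gLeak p α β y ↔ ∑ i, |α i - x * β i| ^ p < ∑ i, |α i - y * β i| ^ p :=
  rpow_lt_rpow_iff (by positivity) (by positivity) (by positivity)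

section
variable (hp : 1 < p) (hβ : β ≠ 0) {θmin : ℝ} (hmin : ∀ θ, gLeak p α β θmin ≤ gLeak p α β θ)
include hp hβ hmin

lemma strictMonoOn_gLeak_Ici : StrictMonoOn (gLeak p α β) (Ici θmin) := by
  have hp0 : 0 < p := by linarith
  have hsum := (strictConvexOn_sum_abs_sub_mul_rpow hp hβ).strictMonoOn_Ici_of_isMinOn
    (isMinOn_univ_iff.2 fun θ => (gLeak_le_gLeak_iff hp0).1 (hmin θ))
  exact fun a ha b hb hab => (gLeak_lt_gLeak_iff hp0).2 (hsum ha hb hab)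

lemma strictAntiOn_gLeak_Iic : StrictAntiOn (gLeak p α β) (Iic θmin) := by
  have hp0 : 0 < p := by linarith
  have hsum := (strictConvexOn_sum_abs_sub_mul_rpow hp hβ).strictAntiOn_Iic_of_isMinOn
    (isMinOn_univ_iff.2 fun θ => (gLeak_le_gLeak_iff hp0).1 (hmin θ))
  exact fun a ha b hb hab => (gLeak_lt_gLeak_iff hp0).2 (hsum ha hb hab)
end

lemma continuous_gLeak (hp : 0 < p) : Continuous (gLeak p α β) :=
  (continuous_finsetSum _ fun i _ => (by fun_prop : Continuous fun θ : ℝ => |α i - θ * β i|)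
    |>.rpow_const fun _ => Or.inr hp.le).rpow_const fun _ => Or.inr (by positivity)

lemma abs_sub_mul_le_gLeak (hp : 0 < p) (i : Fin d) (θ : ℝ) :
    |α i - θ * β i| ≤ gLeak p α β θ :=
  calc |α i - θ * β i| = (|α i - θ * β i| ^ p) ^ (1 / p) := by
        rw [← rpow_mul (abs_nonneg _), mul_one_div_cancel hp.ne', rpow_one]
    _ ≤ gLeak p α β θ := rpow_le_rpow (by positivity)
        (Finset.single_le_sum (f := fun j => |α j - θ * β j| ^ p) (fun j _ => by positivity)
          (Finset.mem_univ i)) (by positivity)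

lemma tendsto_gLeak_cocompact (hp : 0 < p) (hβ : β ≠ 0) :
    Tendsto (gLeak p α β) (cocompact ℝ) atTop := by
  obtain ⟨i, hi⟩ := Function.ne_iff.1 hβ
  have hlin : Tendsto (fun θ : ℝ => ‖θ‖ * |β i| + -|α i|) (cocompact ℝ) atTop :=
    tendsto_atTop_add_const_right _ _ (tendsto_norm_cocompact_atTop.atTop_mul_const (abs_pos.2 hi))
  refine tendsto_atTop_mono (fun θ => ?_) hlin
  calc ‖θ‖ * |β i| + -|α i| ≤ |α i - θ * β i| := by
        rw [Real.norm_eq_abs, ← abs_mul, ← sub_eq_add_neg, abs_sub_comm]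
        exact abs_sub_abs_le_abs_sub _ _
    _ ≤ gLeak p α β θ := abs_sub_mul_le_gLeak hp i θ
end

section
variable {α δ : Type*} [ConditionallyCompleteLinearOrder α] [TopologicalSpace α] [OrderTopology α]
  [DenselyOrdered α] [LinearOrder δ] [TopologicalSpace δ] [OrderClosedTopology δ] [NoMaxOrder δ]
  {g : α → δ} {m : α} {τ : δ}

lemma existsUnique_mem_Ioi_eq (hg : ContinuousOn g (Ici m)) (hmono : StrictMonoOn g (Ici m))
    (hm : g m < τ) (htop : Tendsto g atTop atTop) : ∃! x, x ∈ Ioi m ∧ g x = τ := by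
  obtain ⟨b, hτb, hmb⟩ := ((htop.eventually_gt_atTop τ).and (eventually_ge_atTop m)).exists
  obtain ⟨x, hx, hgx⟩ := intermediate_value_Ioo hmb (hg.mono Icc_subset_Ici_self) ⟨hm, hτb⟩
  exact ⟨x, ⟨hx.1, hgx⟩, fun y ⟨hy, hgy⟩ =>
    hmono.injOn (mem_Ici_of_Ioi hy) (mem_Ici_of_Ioi hx.1) (hgy.trans hgx.symm)⟩

lemma existsUnique_mem_Iio_eq (hg : ContinuousOn g (Iic m)) (hanti : StrictAntiOn g (Iic m))
    (hm : g m < τ) (hbot : Tendsto g atBot atTop) : ∃! x, x ∈ Iio m ∧ g x = τ :=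
  existsUnique_mem_Ioi_eq (α := αᵒᵈ) (m := OrderDual.toDual m) hg hanti.dual_left hm hbot
end

lemma setOf_le_eq_Icc_of_strictAntiOn_of_strictMonoOn {α δ : Type*} [LinearOrder α] [Preorder δ]
    {g : α → δ} {m a b : α} {τ : δ} (hanti : StrictAntiOn g (Iic m))
    (hmono : StrictMonoOn g (Ici m))
    (ha : a ≤ m) (hb : m ≤ b) (hga : g a = τ) (hgb : g b = τ) : {x | g x ≤ τ} = Icc a b := by
  ext x
  rw [mem_ofPred_eq, mem_Icc]
  rcases le_total x m with hx | hx
  · rw [← hga, hanti.le_iff_ge hx ha]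
    exact ⟨fun h => ⟨h, hx.trans hb⟩, And.left⟩
  · rw [← hgb, hmono.le_iff_le hx hb]
    exact ⟨fun h => ⟨ha.trans hx, h⟩, And.right⟩

lemma strictMonoOn_div_sqrt_one_sub_sq :
    StrictMonoOn (fun ρ : ℝ => ρ / √(1 - ρ ^ 2)) (Ioo (-1) 1) := by
  simp_rw [← tan_arcsin]
  refine strictMonoOn_tan.comp (strictMonoOn_arcsin.mono Ioo_subset_Icc_self) ?_
  exact fun x hx => ⟨neg_pi_div_two_lt_arcsin.2 hx.1, arcsin_lt_pi_div_two.2 hx.2⟩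

lemma surjOn_div_sqrt_one_sub_sq :
    SurjOn (fun ρ : ℝ => ρ / √(1 - ρ ^ 2)) (Ioo (-1) 1) univ := by
  intro t _
  have h := arcsin_sin (neg_pi_div_two_lt_arctan t).le (arctan_lt_pi_div_two t).le
  refine ⟨sin (arctan t), ⟨?_, ?_⟩, ?_⟩
  · exact neg_pi_div_two_lt_arcsin.1 (h.symm ▸ neg_pi_div_two_lt_arctan t)
  · exact arcsin_lt_pi_div_two.1 (h.symm ▸ arctan_lt_pi_div_two t)
  · simp only [← tan_arcsin, h, tan_arctan]

noncomputable def ateOfConfounding (κxx κxy κyy ρ : ℝ) : ℝ :=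
  κxx⁻¹ * (κxy - √(κxx * κyy - κxy ^ 2) * (ρ / √(1 - ρ ^ 2)))

section
variable {κxx κxy κyy : ℝ} (hκxx : 0 < κxx) (hdet : 0 < κxx * κyy - κxy ^ 2)
include hκxx hdet

lemma strictAntiOn_ateOfConfounding :
    StrictAntiOn (ateOfConfounding κxx κxy κyy) (Ioo (-1) 1) := by
  intro x hx y hy hxy
  have hφ := strictMonoOn_div_sqrt_one_sub_sq hx hy hxy
  have hC : 0 < √(κxx * κyy - κxy ^ 2) := sqrt_pos.2 hdet
  unfold ateOfConfounding
  gcongr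

lemma surjOn_ateOfConfounding :
    SurjOn (ateOfConfounding κxx κxy κyy) (Ioo (-1) 1) univ := by
  intro θ _
  have hC : 0 < √(κxx * κyy - κxy ^ 2) := sqrt_pos.2 hdet
  obtain ⟨ρ, hρ, hφ⟩ :=
    surjOn_div_sqrt_one_sub_sq (mem_univ ((κxy - κxx * θ) / √(κxx * κyy - κxy ^ 2)))
  refine ⟨ρ, hρ, ?_⟩
  simp only [ateOfConfounding] at hφ ⊢
  rw [hφ]
  field_simp
  ring
end

section
variable {α β : Type*} [LinearOrder α] [LinearOrder β] {f : α → β} {a b c : α}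

lemma StrictAntiOn.bijOn_Ioo_Ioi (hf : StrictAntiOn f (Ioo a b)) (hsurj : SurjOn f (Ioo a b) univ)
    (hc : c ∈ Ioo a b) : BijOn f (Ioo a c) (Ioi (f c)) := by
  have hsub : Ioo a c ⊆ Ioo a b := Ioo_subset_Ioo_right hc.2.le
  refine ⟨fun x hx => hf (hsub hx) hc hx.2, hf.injOn.mono hsub, fun y hy => ?_⟩
  obtain ⟨x, hx, rfl⟩ := hsurj (mem_univ y)
  exact ⟨x, ⟨hx.1, (hf.lt_iff_gt hc hx).1 hy⟩, rfl⟩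

lemma StrictAntiOn.bijOn_Ioo_Iio (hf : StrictAntiOn f (Ioo a b)) (hsurj : SurjOn f (Ioo a b) univ)
    (hc : c ∈ Ioo a b) : BijOn f (Ioo c b) (Iio (f c)) := by
  have hsub : Ioo c b ⊆ Ioo a b := Ioo_subset_Ioo_left hc.1.le
  refine ⟨fun x hx => hf hc (hsub hx) hx.1, hf.injOn.mono hsub, fun y hy => ?_⟩
  obtain ⟨x, hx, rfl⟩ := hsurj (mem_univ y)
  exact ⟨x, ⟨(hf.lt_iff_gt hx hc).1 hy, hx.2⟩, rfl⟩
end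

lemma Set.BijOn.existsUnique_comp {α β : Type*} {f : α → β} {s : Set α} {t : Set β}
    (hf : BijOn f s t) {P : β → Prop} (h : ∃! y, y ∈ t ∧ P y) : ∃! x, x ∈ s ∧ P (f x) := by
  obtain ⟨y, ⟨hy, hPy⟩, huniq⟩ := h
  obtain ⟨x, hx, rfl⟩ := hf.surjOn hy
  exact ⟨x, ⟨hx, hPy⟩, fun x' ⟨hx', hPx'⟩ => hf.injOn hx' hx (huniq _ ⟨hf.mapsTo hx', hPx'⟩)⟩

theorem ATE_bounds_general
    {d : ℕ} (p : ℝ) (hp : 1 < p) (α β : Fin d → ℝ) (hβ : β ≠ 0)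
    (κxx κxy κyy : ℝ) (hκxx : 0 < κxx) (hdet : 0 < κxx * κyy - κxy ^ 2)
    (f : ℝ → ℝ)
    (hf : ∀ ρ : ℝ, f ρ =
      κxx⁻¹ * (κxy - Real.sqrt (κxx * κyy - κxy ^ 2) * (ρ / Real.sqrt (1 - ρ ^ 2))))
    (τ : ℝ) (hτ : (⨅ θ : ℝ, gLeak p α β θ) < τ)
    (θmin : ℝ) (hθmin : ∀ t : ℝ, gLeak p α β θmin ≤ gLeak p α β t)
    (ρmin : ℝ) (hρmem : ρmin ∈ Set.Ioo (-1 : ℝ) 1) (hρmin : f ρmin = θmin) :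
    (∃! ρlo : ℝ, ρlo ∈ Set.Ioo (-1 : ℝ) ρmin ∧ (gLeak p α β ∘ f) ρlo = τ) ∧
    (∃! ρhi : ℝ, ρhi ∈ Set.Ioo ρmin 1 ∧ (gLeak p α β ∘ f) ρhi = τ) ∧
    (∀ ρlo ρhi : ℝ,
      ρlo ∈ Set.Ioo (-1 : ℝ) ρmin → (gLeak p α β ∘ f) ρlo = τ →
      ρhi ∈ Set.Ioo ρmin 1 → (gLeak p α β ∘ f) ρhi = τ →
      {θ : ℝ | gLeak p α β θ ≤ τ} = Set.Icc (f ρhi) (f ρlo)) := by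
  obtain rfl : f = ateOfConfounding κxx κxy κyy := funext hf
  have hp0 : 0 < p := by linarith
  have hanti := strictAntiOn_gLeak_Iic hp hβ hθmin
  have hmono := strictMonoOn_gLeak_Ici hp hβ hθmin
  have hcont := continuous_gLeak hp0 (α := α) (β := β)
  have htend := tendsto_gLeak_cocompact hp0 (α := α) hβ
  have hbelow : gLeak p α β θmin < τ := (le_ciInf hθmin).trans_lt hτ
  have hbij_lo := (strictAntiOn_ateOfConfounding hκxx hdet).bijOn_Ioo_Ioi
    (surjOn_ateOfConfounding hκxx hdet) hρmem
  have hbij_hi := (strictAntiOn_ateOfConfounding hκxx hdet).bijOn_Ioo_Iio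
    (surjOn_ateOfConfounding hκxx hdet) hρmem
  rw [hρmin] at hbij_lo hbij_hi
  refine ⟨hbij_lo.existsUnique_comp (existsUnique_mem_Ioi_eq hcont.continuousOn hmono hbelow
      (htend.mono_left atTop_le_cocompact)),
    hbij_hi.existsUnique_comp (existsUnique_mem_Iio_eq hcont.continuousOn hanti hbelow
      (htend.mono_left atBot_le_cocompact)),
    fun ρlo ρhi hlo hglo hhi hghi => ?_⟩
  exact setOf_le_eq_Icc_of_strictAntiOn_of_strictMonoOn hanti hmono
    (hbij_hi.mapsTo hhi).le (hbij_lo.mapsTo hlo).le hghi hglo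

/-- **Theorem 2, ATE bounds.** Assume `β ≠ 0`, `1 < p < ∞`, and `τ > τ̌_p`.
With `h_p = g_p ∘ f` on `(−1, 1)` and `ρ̌_p = f⁻¹(θ̌_p)` for the unique minimizer `θ̌_p` of
`g_p`, there exist unique `ρ⁻ ∈ (−1, ρ̌_p)` and `ρ⁺ ∈ (ρ̌_p, 1)` with
`h_p(ρ⁻) = h_p(ρ⁺) = τ`; moreover, writing `[θ⁻, θ⁺] = {θ : g_p(θ) ≤ τ}`, one has
`θ⁻ = f(ρ⁺)` and `θ⁺ = f(ρ⁻)`. -/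
theorem ATE_bounds
    {d : ℕ} (hd : 1 ≤ d) (p : ℝ) (hp : 1 < p) (α β : Fin d → ℝ) (hβ : β ≠ 0)
    (κxx κxy κyy : ℝ) (hκxx : 0 < κxx) (hdet : 0 < κxx * κyy - κxy ^ 2)
    (f : ℝ → ℝ)
    (hf : ∀ ρ : ℝ, f ρ =
      κxx⁻¹ * (κxy - Real.sqrt (κxx * κyy - κxy ^ 2) * (ρ / Real.sqrt (1 - ρ ^ 2))))
    (τ : ℝ) (hτ : (⨅ θ : ℝ, gLeak p α β θ) < τ)
    (θmin : ℝ) (hθmin : ∀ t : ℝ, gLeak p α β θmin ≤ gLeak p α β t)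
    (ρmin : ℝ) (hρmem : ρmin ∈ Set.Ioo (-1 : ℝ) 1) (hρmin : f ρmin = θmin) :
    (∃! ρlo : ℝ, ρlo ∈ Set.Ioo (-1 : ℝ) ρmin ∧ (gLeak p α β ∘ f) ρlo = τ) ∧
    (∃! ρhi : ℝ, ρhi ∈ Set.Ioo ρmin 1 ∧ (gLeak p α β ∘ f) ρhi = τ) ∧
    (∀ ρlo ρhi : ℝ,
      ρlo ∈ Set.Ioo (-1 : ℝ) ρmin → (gLeak p α β ∘ f) ρlo = τ →
      ρhi ∈ Set.Ioo ρmin 1 → (gLeak p α β ∘ f) ρhi = τ →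
      {θ : ℝ | gLeak p α β θ ≤ τ} = Set.Icc (f ρhi) (f ρlo)) :=
  ATE_bounds_general p hp α β hβ κxx κxy κyy hκxx hdet f hf τ hτ θmin hθmin ρmin hρmem hρmin
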